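/- Let f ∈ Hol(𝔻,𝔻), not an automorphism, with f(0)=0, β_f(σ) < +∞ and f(σ) = σ for some σ ∈ ∂𝔻. Then β_f(σ) ≥ 1 + |1 − f'(0)|²/(1 − |f'(0)|²). -/

import Mathlib

/-!
Along an ultrafilter on which `(1 - ‖f w‖) / (1 - ‖w‖) → β` and (by compactness) `f w → τ`,
the Schwarz–Pick inequality at the pair `(z, w)` becomes Julia's inequality
`(1 - ‖z‖²) ‖1 - conj τ * f z‖² ≤ β (1 - ‖f z‖²) ‖σ - z‖²`, and the radial limit `f (tσ) → σ` forces
`τ = σ`. Julia's inequality says that `H = β (σ + f) / (σ - f) - (σ + z) / (σ - z)` has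
nonnegative real part on the disk; since `H 0 = β - 1` and `H' 0 = 2 (β f'(0) - 1) / σ`,
Carathéodory's inequality `‖H' 0‖ ≤ 2 Re (H 0)` gives `‖β f'(0) - 1‖ ≤ β - 1`, which
rearranges to the claim.
-/

open Complex Filter Set Metric Finset

noncomputable section

/-- `f` is a holomorphic self-map of the open unit disk. -/
def HolSelfDisk (f : ℂ → ℂ) : Prop :=
  DifferentiableOn ℂ f (Metric.ball (0:ℂ) 1) ∧
    Set.MapsTo f (Metric.ball (0:ℂ) 1) (Metric.ball (0:ℂ) 1)

/-- `B` is a finite Blaschke product of degree `d` (as a function on the unit disk). -/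
def IsBlaschke (d : ℕ) (B : ℂ → ℂ) : Prop :=
  ∃ (θ : ℝ) (a : Fin d → ℂ), (∀ j, ‖a j‖ < 1) ∧
    ∀ z ∈ Metric.ball (0:ℂ) 1,
      B z = Complex.exp (θ * Complex.I) *
        ∏ j, (z - a j) / (1 - (starRingEnd ℂ) (a j) * z)

/-- The hyperbolic difference quotient `f*(z,w)`. -/
def hdq (f : ℂ → ℂ) (w : ℂ) (z : ℂ) : ℂ :=
  if z = w then
    deriv f z * ((1 - ‖z‖ ^ 2 : ℝ) : ℂ) / ((1 - ‖f z‖ ^ 2 : ℝ) : ℂ)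
  else
    ((f z - f w) / (1 - (starRingEnd ℂ) (f w) * f z)) /
      ((z - w) / (1 - (starRingEnd ℂ) w * z))

/-- Iterated hyperbolic difference quotient: `iterHdq f w h = Δ_{w (h-1), …, w 0} f`. -/
def iterHdq (f : ℂ → ℂ) (w : ℕ → ℂ) : ℕ → ℂ → ℂ
  | 0 => f
  | h + 1 => hdq (iterHdq f w h) (w h)

/-- The Stolz region of vertex `σ` and amplitude `M`. -/
def Stolz (σ : ℂ) (M : ℝ) : Set ℂ :=
  {z : ℂ | ‖z‖ < 1 ∧ ‖σ - z‖ / (1 - ‖z‖) < M}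

/-- `f` has non-tangential limit `c` at `σ`. -/
def NTLim (f : ℂ → ℂ) (σ c : ℂ) : Prop :=
  ∀ M : ℝ, 1 < M → Filter.Tendsto f (nhdsWithin σ (Stolz σ M)) (nhds c)

/-- The boundary dilation coefficient, as an extended real number. -/
def betaE (f : ℂ → ℂ) (σ : ℂ) : EReal :=
  Filter.liminf
    (fun z => (((1 - ‖f z‖) / (1 - ‖z‖) : ℝ) : EReal))
    (nhdsWithin σ (Metric.ball (0:ℂ) 1))

open ComplexConjugate Topology

section Caratheodory

variable {G : ℂ → ℂ} {c : ℂ} {R : ℝ}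

/-- The Cayley transform `(G - G c) / (G + conj (G c))` maps the disk into the unit disk and
sends `c` to `0`, so the Schwarz lemma bounds its derivative `G' c / (2 Re (G c))` at `c`. -/
lemma norm_deriv_mul_le_two_mul_re_of_re_pos (hR : 0 < R)
    (hd : DifferentiableOn ℂ G (ball c R)) (hre : ∀ z ∈ ball c R, 0 < (G z).re) :
    ‖deriv G c‖ * R ≤ 2 * (G c).re := by
  set a := G c
  have hc : c ∈ ball c R := mem_ball_self hR
  have hre_a : 0 < a.re := hre c hc
  have hden : ∀ z ∈ ball c R, G z + conj a ≠ 0 := fun z hz h ↦ by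
    have := congrArg Complex.re h
    simp only [Complex.add_re, Complex.conj_re, Complex.zero_re] at this
    linarith [hre z hz]
  set P : ℂ → ℂ := fun z ↦ (G z - a) / (G z + conj a)
  have hPd : DifferentiableOn ℂ P (ball c R) :=
    (hd.sub_const a).div (hd.add_const _) hden
  have hPmaps : MapsTo P (ball c R) (closedBall (P c) 1) := fun z hz ↦ by
    have hsq : ‖G z - a‖ ^ 2 ≤ ‖G z + conj a‖ ^ 2 := by
      simp only [← Complex.normSq_eq_norm_sq, Complex.normSq_apply, Complex.add_re,
        Complex.add_im, Complex.sub_re, Complex.sub_im, Complex.conj_re, Complex.conj_im]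
      nlinarith [hre z hz]
    have hP0 : P c = 0 := by simp [P, a]
    rw [hP0, mem_closedBall_zero_iff, norm_div, div_le_one (norm_pos_iff.mpr (hden z hz))]
    exact pow_le_pow_iff_left₀ (norm_nonneg _) (norm_nonneg _) two_ne_zero |>.mp hsq
  have hG : HasDerivAt G (deriv G c) c :=
    (hd.differentiableAt (isOpen_ball.mem_nhds hc)).hasDerivAt
  have hP : HasDerivAt P (deriv G c / (a + conj a)) c := by
    refine ((hG.sub_const a).div (hG.add_const (conj a)) (hden c hc)).congr_deriv ?_
    rw [sub_self, zero_mul, sub_zero, sq, mul_div_mul_right _ _ (hden c hc)]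
  have hSchwarz := Complex.norm_deriv_le_div_of_mapsTo_ball hPd hPmaps hR
  rw [hP.deriv, norm_div, Complex.add_conj, Complex.norm_real, Real.norm_eq_abs,
    div_le_div_iff₀ (by positivity) hR] at hSchwarz
  rw [abs_of_pos (by positivity)] at hSchwarz
  linarith

lemma norm_deriv_mul_le_two_mul_re (hR : 0 < R) (hd : DifferentiableOn ℂ G (ball c R))
    (hre : ∀ z ∈ ball c R, 0 ≤ (G z).re) :
    ‖deriv G c‖ * R ≤ 2 * (G c).re := by
  refine le_of_forall_pos_le_add fun ε hε ↦ ?_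
  have hε' := norm_deriv_mul_le_two_mul_re_of_re_pos hR (hd.add_const ((ε / 2 : ℝ) : ℂ))
    fun z hz ↦ by
      rw [Complex.add_re, Complex.ofReal_re]
      linarith [hre z hz]
  rw [deriv_add_const, Complex.add_re, Complex.ofReal_re] at hε'
  linarith

end Caratheodory

def mobius (a z : ℂ) : ℂ := (a - z) / (1 - conj a * z)

lemma norm_one_sub_conj_mul_sq (a z : ℂ) :
    ‖1 - conj a * z‖ ^ 2 = ‖a - z‖ ^ 2 + (1 - ‖a‖ ^ 2) * (1 - ‖z‖ ^ 2) := by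
  simp only [← Complex.normSq_eq_norm_sq, Complex.normSq_apply]
  simp only [Complex.sub_re, Complex.sub_im, Complex.mul_re, Complex.mul_im, Complex.conj_re,
    Complex.conj_im, Complex.one_re, Complex.one_im]
  ring

lemma one_sub_conj_mul_ne_zero {a z : ℂ} (ha : ‖a‖ < 1) (hz : ‖z‖ < 1) :
    1 - conj a * z ≠ 0 := by
  have : ‖conj a * z‖ < 1 := by
    rw [norm_mul, Complex.norm_conj]
    nlinarith [norm_nonneg a, norm_nonneg z]
  intro h
  rw [← sub_eq_zero.mp h, norm_one] at this
  exact this.false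

lemma one_sub_norm_mobius_sq {a z : ℂ} (h : 1 - conj a * z ≠ 0) :
    1 - ‖mobius a z‖ ^ 2 = (1 - ‖a‖ ^ 2) * (1 - ‖z‖ ^ 2) / ‖1 - conj a * z‖ ^ 2 := by
  have hD : ‖1 - conj a * z‖ ^ 2 ≠ 0 := by positivity
  rw [mobius, norm_div, div_pow, eq_div_iff hD, sub_mul, div_mul_cancel₀ _ hD,
    norm_one_sub_conj_mul_sq]
  ring

lemma norm_one_sub_conj_mul_of_norm_eq_one {σ : ℂ} (hσ : ‖σ‖ = 1) (w : ℂ) :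
    ‖1 - conj σ * w‖ = ‖σ - w‖ := by
  have h := norm_one_sub_conj_mul_sq σ w
  rw [hσ, one_pow, sub_self, zero_mul, add_zero] at h
  exact (sq_eq_sq₀ (norm_nonneg _) (norm_nonneg _)).mp h

lemma norm_mobius_lt_one {a z : ℂ} (ha : ‖a‖ < 1) (hz : ‖z‖ < 1) : ‖mobius a z‖ < 1 := by
  have hD := one_sub_conj_mul_ne_zero ha hz
  have hpos : 0 < (1 - ‖a‖ ^ 2) * (1 - ‖z‖ ^ 2) / ‖1 - conj a * z‖ ^ 2 := by
    apply div_pos (mul_pos _ _) (by positivity) <;> nlinarith [norm_nonneg a, norm_nonneg z]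
  rw [← one_sub_norm_mobius_sq hD] at hpos
  nlinarith [norm_nonneg (mobius a z)]

lemma mobius_mobius {a z : ℂ} (ha : ‖a‖ < 1) (hz : ‖z‖ < 1) : mobius a (mobius a z) = z := by
  have hD := one_sub_conj_mul_ne_zero ha hz
  have hD' := one_sub_conj_mul_ne_zero ha (norm_mobius_lt_one ha hz)
  rw [mobius] at hD' ⊢
  rw [mobius, div_eq_iff hD', div_eq_mul_inv (a - z)]
  linear_combination (z - a) * mul_inv_cancel₀ hD

lemma differentiableOn_mobius {a : ℂ} (ha : ‖a‖ < 1) :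
    DifferentiableOn ℂ (mobius a) (ball 0 1) :=
  ((differentiableOn_const a).sub differentiableOn_id).div
    ((differentiableOn_const 1).sub (differentiableOn_id.const_mul _))
    fun _ hz ↦ one_sub_conj_mul_ne_zero ha (mem_ball_zero_iff.mp hz)

lemma mapsTo_mobius {a : ℂ} (ha : ‖a‖ < 1) : MapsTo (mobius a) (ball 0 1) (ball 0 1) :=
  fun _ hz ↦ mem_ball_zero_iff.mpr (norm_mobius_lt_one ha (mem_ball_zero_iff.mp hz))

lemma re_add_div_sub_of_norm_eq_one {σ : ℂ} (hσ : ‖σ‖ = 1) (w : ℂ) :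
    ((σ + w) / (σ - w)).re = (1 - ‖w‖ ^ 2) / ‖σ - w‖ ^ 2 := by
  have hσ2 : σ.re ^ 2 + σ.im ^ 2 = 1 := by
    have := Complex.sq_norm σ
    rw [hσ, Complex.normSq_apply] at this
    nlinarith
  rw [Complex.div_re, ← add_div, Complex.sq_norm, Complex.sq_norm, Complex.normSq_apply,
    Complex.normSq_apply]
  congr 1
  simp only [Complex.add_re, Complex.add_im, Complex.sub_re, Complex.sub_im]
  nlinarith [hσ2]

lemma HasDerivAt.const_add_div_const_sub {g : ℂ → ℂ} {g' x σ : ℂ} (hg : HasDerivAt g g' x)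
    (hx : σ - g x ≠ 0) :
    HasDerivAt (fun z ↦ (σ + g z) / (σ - g z)) (2 * σ * g' / (σ - g x) ^ 2) x := by
  refine ((hg.const_add σ).div (hg.const_sub σ) hx).congr_deriv ?_
  ring

lemma exists_ultrafilter_tendsto_of_liminf_coe_eq {X : Type*} {l : Filter X} [l.NeBot]
    {g : X → ℝ} {b : ℝ} (h : liminf (fun x ↦ (g x : EReal)) l = b) :
    ∃ U : Ultrafilter X, ↑U ≤ l ∧ Tendsto g U (𝓝 b) := by
  have hb : MapClusterPt (b : EReal) l (fun x ↦ (g x : EReal)) := h ▸ MapClusterPt.liminf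
  exact mapClusterPt_iff_ultrafilter.mp (EReal.isEmbedding_coe.isInducing.mapClusterPt_iff.mp hb)

lemma tendsto_ofReal_mul_nhdsLT_one_stolz {σ : ℂ} (hσ : ‖σ‖ = 1) {M : ℝ} (hM : 1 < M) :
    Tendsto (fun t : ℝ ↦ (t : ℂ) * σ) (𝓝[<] 1) (𝓝[Stolz σ M] σ) := by
  refine tendsto_nhdsWithin_iff.mpr ⟨?_, ?_⟩
  · have : Tendsto (fun t : ℝ ↦ (t : ℂ) * σ) (𝓝 1) (𝓝 ((1 : ℝ) * σ)) :=
      (Complex.continuous_ofReal.mul continuous_const).tendsto 1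
    rw [Complex.ofReal_one, one_mul] at this
    exact this.mono_left nhdsWithin_le_nhds
  · filter_upwards [Ioo_mem_nhdsLT zero_lt_one] with t ⟨ht0, ht1⟩
    have hnorm : ‖(t : ℂ) * σ‖ = t := by
      rw [norm_mul, hσ, mul_one, Complex.norm_real, Real.norm_of_nonneg ht0.le]
    have hdist : ‖σ - (t : ℂ) * σ‖ = 1 - t := by
      rw [← one_sub_mul, norm_mul, hσ, mul_one, ← Complex.ofReal_one, ← Complex.ofReal_sub,
        Complex.norm_real, Real.norm_of_nonneg (by linarith)]
    refine ⟨hnorm.trans_lt ht1, ?_⟩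
    rw [hnorm, hdist, div_self (by linarith)]
    exact hM

/-- Along the radius ending at `σ`, the Julia inequality at `τ` forces `conj τ * f (tσ) → 1`,
while the non-tangential limit gives `f (tσ) → σ`. -/
lemma eq_of_julia_of_ntLim {f : ℂ → ℂ} {σ τ : ℂ} {β : ℝ} (hσ : ‖σ‖ = 1) (hlim : NTLim f σ σ)
    (hJ : ∀ z : ℂ, ‖z‖ < 1 →
      (1 - ‖z‖ ^ 2) * ‖1 - conj τ * f z‖ ^ 2 ≤ β * (1 - ‖f z‖ ^ 2) * ‖1 - conj σ * z‖ ^ 2) :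
    τ = σ := by
  have hσσ : conj σ * σ = 1 := by rw [Complex.conj_mul', hσ]; norm_num
  have hrad : Tendsto (fun t : ℝ ↦ f ((t : ℂ) * σ)) (𝓝[<] 1) (𝓝 σ) :=
    (hlim 2 one_lt_two).comp (tendsto_ofReal_mul_nhdsLT_one_stolz hσ one_lt_two)
  have ht : Tendsto (fun t : ℝ ↦ t) (𝓝[<] 1) (𝓝 1) := nhdsWithin_le_nhds
  have hineq : ∀ᶠ t : ℝ in 𝓝[<] 1, (1 + t) * ‖1 - conj τ * f ((t : ℂ) * σ)‖ ^ 2 ≤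
      β * (1 - ‖f ((t : ℂ) * σ)‖ ^ 2) * (1 - t) := by
    filter_upwards [Ioo_mem_nhdsLT zero_lt_one] with t ⟨ht0, ht1⟩
    have hnorm : ‖(t : ℂ) * σ‖ = t := by
      rw [norm_mul, hσ, mul_one, Complex.norm_real, Real.norm_of_nonneg ht0.le]
    have hdist : ‖1 - conj σ * ((t : ℂ) * σ)‖ = 1 - t := by
      rw [mul_left_comm, hσσ, mul_one, ← Complex.ofReal_one, ← Complex.ofReal_sub,
        Complex.norm_real, Real.norm_of_nonneg (by linarith)]
    have h := hJ _ (hnorm.trans_lt ht1)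
    rw [hnorm, hdist] at h
    refine le_of_mul_le_mul_left ?_ (sub_pos.mpr ht1)
    linear_combination h
  have hL : Tendsto (fun t : ℝ ↦ (1 + t) * ‖1 - conj τ * f ((t : ℂ) * σ)‖ ^ 2) (𝓝[<] 1)
      (𝓝 ((1 + 1) * ‖1 - conj τ * σ‖ ^ 2)) :=
    (tendsto_const_nhds.add ht).mul ((tendsto_const_nhds.sub (hrad.const_mul _)).norm.pow 2)
  have hR : Tendsto (fun t : ℝ ↦ β * (1 - ‖f ((t : ℂ) * σ)‖ ^ 2) * (1 - t)) (𝓝[<] 1)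
      (𝓝 (β * (1 - 1 ^ 2) * (1 - 1))) :=
    (tendsto_const_nhds.mul (tendsto_const_nhds.sub (hσ ▸ hrad.norm.pow 2))).mul
      (tendsto_const_nhds.sub ht)
  have hzero : ‖1 - conj τ * σ‖ ^ 2 ≤ 0 := by
    have := le_of_tendsto_of_tendsto hL hR hineq
    norm_num at this
    nlinarith
  have h1 : conj τ * σ = 1 :=
    (sub_eq_zero.mp (norm_eq_zero.mp (pow_eq_zero_iff two_ne_zero |>.mp
      (le_antisymm hzero (by positivity))))).symm
  have hσ0 : σ ≠ 0 := norm_ne_zero_iff.mp (hσ ▸ one_ne_zero)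
  exact (starRingEnd ℂ).injective (mul_right_cancel₀ hσ0 (h1.trans hσσ.symm))

lemma one_add_norm_one_sub_sq_div_le {c : ℂ} {β : ℝ} (h : ‖β * c - 1‖ ≤ β - 1) :
    1 + ‖1 - c‖ ^ 2 / (1 - ‖c‖ ^ 2) ≤ β := by
  have hβ : 1 ≤ β := by linarith [norm_nonneg (β * c - 1)]
  have hsq : ‖β * c - 1‖ ^ 2 ≤ (β - 1) ^ 2 := pow_le_pow_left₀ (norm_nonneg _) h 2
  simp only [← Complex.normSq_eq_norm_sq, Complex.normSq_apply] at hsq ⊢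
  simp only [Complex.sub_re, Complex.sub_im, Complex.mul_re, Complex.mul_im, Complex.ofReal_re,
    Complex.ofReal_im, Complex.one_re, Complex.one_im] at hsq ⊢
  rcases le_or_gt (1 - (c.re * c.re + c.im * c.im)) 0 with hc | hc
  · have := div_nonpos_of_nonneg_of_nonpos
      (add_nonneg (mul_self_nonneg (1 - c.re)) (mul_self_nonneg (0 - c.im))) hc
    linarith
  · -- `hsq` expands to `β (β ‖c‖² - 2 Re c) ≤ β (β - 2)`, i.e. `2 (1 - Re c) ≤ β (1 - ‖c‖²)`.
    rw [← le_sub_iff_add_le', div_le_iff₀ hc]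
    nlinarith

namespace HolSelfDisk

variable {f : ℂ → ℂ} {σ τ z w : ℂ} {β : ℝ}

lemma norm_lt_one (hf : HolSelfDisk f) (hz : ‖z‖ < 1) : ‖f z‖ < 1 :=
  mem_ball_zero_iff.mp (hf.2 (mem_ball_zero_iff.mpr hz))

/-- The Schwarz lemma applied to `mobius (f w) ∘ f ∘ mobius w`, which fixes `0`. -/
lemma norm_mobius_le_norm_mobius (hf : HolSelfDisk f) (hz : ‖z‖ < 1) (hw : ‖w‖ < 1) :
    ‖mobius (f w) (f z)‖ ≤ ‖mobius w z‖ := by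
  have hfw := hf.norm_lt_one hw
  have hd : DifferentiableOn ℂ (mobius (f w) ∘ f ∘ mobius w) (ball 0 1) :=
    (differentiableOn_mobius hfw).comp (hf.1.comp (differentiableOn_mobius hw) (mapsTo_mobius hw))
      (hf.2.comp (mapsTo_mobius hw))
  have hmaps : MapsTo (mobius (f w) ∘ f ∘ mobius w) (ball 0 1) (closedBall 0 1) :=
    ((mapsTo_mobius hfw).comp (hf.2.comp (mapsTo_mobius hw))).mono_right ball_subset_closedBall
  have h0 : (mobius (f w) ∘ f ∘ mobius w) 0 = 0 := by simp [mobius]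
  simpa [mobius_mobius hw hz] using
    Complex.norm_le_norm_of_mapsTo_ball hd hmaps h0 (norm_mobius_lt_one hw hz)

lemma schwarz_pick (hf : HolSelfDisk f) (hz : ‖z‖ < 1) (hw : ‖w‖ < 1) :
    (1 - ‖w‖ ^ 2) * (1 - ‖z‖ ^ 2) * ‖1 - conj (f w) * f z‖ ^ 2 ≤
      (1 - ‖f w‖ ^ 2) * (1 - ‖f z‖ ^ 2) * ‖1 - conj w * z‖ ^ 2 := by
  have hD := one_sub_conj_mul_ne_zero hw hz
  have hfD := one_sub_conj_mul_ne_zero (hf.norm_lt_one hw) (hf.norm_lt_one hz)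
  have h := hf.norm_mobius_le_norm_mobius hz hw
  have h2 : 1 - ‖mobius w z‖ ^ 2 ≤ 1 - ‖mobius (f w) (f z)‖ ^ 2 := by
    gcongr
  rwa [one_sub_norm_mobius_sq hD, one_sub_norm_mobius_sq hfD,
    div_le_div_iff₀ (by positivity) (by positivity)] at h2

/-- `1 - ‖f w‖² ≤ 2 (1 - ‖f w‖)` trades the Schwarz–Pick factor at `w` for the ratio whose
liminf at `σ` is the boundary dilation coefficient. -/
lemma schwarz_pick_le_ratio (hf : HolSelfDisk f) (hz : ‖z‖ < 1) (hw : ‖w‖ < 1) :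
    (1 - ‖z‖ ^ 2) * (1 + ‖w‖) * ‖1 - conj (f w) * f z‖ ^ 2 ≤
      2 * ((1 - ‖f w‖) / (1 - ‖w‖) * (1 - ‖f z‖ ^ 2) * ‖1 - conj w * z‖ ^ 2) := by
  have hw' : 0 < 1 - ‖w‖ := sub_pos.mpr hw
  have hfw := hf.norm_lt_one hw
  have hfz := hf.norm_lt_one hz
  have hB : 0 ≤ (1 - ‖f z‖ ^ 2) * ‖1 - conj w * z‖ ^ 2 := by
    have : ‖f z‖ ^ 2 < 1 := by nlinarith [norm_nonneg (f z)]
    positivity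
  refine le_of_mul_le_mul_left ?_ hw'
  calc (1 - ‖w‖) * ((1 - ‖z‖ ^ 2) * (1 + ‖w‖) * ‖1 - conj (f w) * f z‖ ^ 2)
      = (1 - ‖w‖ ^ 2) * (1 - ‖z‖ ^ 2) * ‖1 - conj (f w) * f z‖ ^ 2 := by ring
    _ ≤ (1 - ‖f w‖ ^ 2) * ((1 - ‖f z‖ ^ 2) * ‖1 - conj w * z‖ ^ 2) := by
      rw [← mul_assoc]; exact hf.schwarz_pick hz hw
    _ ≤ 2 * (1 - ‖f w‖) * ((1 - ‖f z‖ ^ 2) * ‖1 - conj w * z‖ ^ 2) := by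
      gcongr
      nlinarith [norm_nonneg (f w)]
    _ = (1 - ‖w‖) *
        (2 * ((1 - ‖f w‖) / (1 - ‖w‖) * (1 - ‖f z‖ ^ 2) * ‖1 - conj w * z‖ ^ 2)) := by
      field_simp

lemma julia_of_tendsto (hf : HolSelfDisk f) (hσ : ‖σ‖ = 1) {U : Filter ℂ} [U.NeBot]
    (hU : U ≤ 𝓝[ball 0 1] σ) (hratio : Tendsto (fun w ↦ (1 - ‖f w‖) / (1 - ‖w‖)) U (𝓝 β))
    (hτ : Tendsto f U (𝓝 τ)) (hz : ‖z‖ < 1) :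
    (1 - ‖z‖ ^ 2) * ‖1 - conj τ * f z‖ ^ 2 ≤ β * (1 - ‖f z‖ ^ 2) * ‖1 - conj σ * z‖ ^ 2 := by
  have hσU : Tendsto (fun w ↦ w) U (𝓝 σ) := hU.trans nhdsWithin_le_nhds
  have hball : ∀ᶠ w in U, ‖w‖ < 1 := by
    filter_upwards [hU self_mem_nhdsWithin] with w hw using mem_ball_zero_iff.mp hw
  have hconj : Tendsto (fun w ↦ conj w) U (𝓝 (conj σ)) :=
    (Complex.continuous_conj.tendsto σ).comp hσU
  have hconjf : Tendsto (fun w ↦ conj (f w)) U (𝓝 (conj τ)) :=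
    (Complex.continuous_conj.tendsto τ).comp hτ
  have hL : Tendsto (fun w ↦ (1 - ‖z‖ ^ 2) * (1 + ‖w‖) * ‖1 - conj (f w) * f z‖ ^ 2) U
      (𝓝 ((1 - ‖z‖ ^ 2) * (1 + 1) * ‖1 - conj τ * f z‖ ^ 2)) := by
    refine (tendsto_const_nhds.mul (tendsto_const_nhds.add ?_)).mul
      ((tendsto_const_nhds.sub (hconjf.mul_const _)).norm.pow 2)
    simpa [hσ] using hσU.norm
  have hR : Tendsto (fun w ↦ 2 * ((1 - ‖f w‖) / (1 - ‖w‖) * (1 - ‖f z‖ ^ 2) *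
      ‖1 - conj w * z‖ ^ 2)) U (𝓝 (2 * (β * (1 - ‖f z‖ ^ 2) * ‖1 - conj σ * z‖ ^ 2))) :=
    tendsto_const_nhds.mul ((hratio.mul_const _).mul
      ((tendsto_const_nhds.sub (hconj.mul_const _)).norm.pow 2))
  have := le_of_tendsto_of_tendsto hL hR
    (hball.mono fun w hw ↦ hf.schwarz_pick_le_ratio hz hw)
  linarith

theorem julia (hf : HolSelfDisk f) (hσ : ‖σ‖ = 1) (hβ : betaE f σ = β) (hlim : NTLim f σ σ)
    (hz : ‖z‖ < 1) :
    (1 - ‖z‖ ^ 2) * ‖σ - f z‖ ^ 2 ≤ β * (1 - ‖f z‖ ^ 2) * ‖σ - z‖ ^ 2 := by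
  have : (𝓝[ball 0 1] σ).NeBot := mem_closure_iff_nhdsWithin_neBot.mp <| by
    rw [closure_ball _ one_ne_zero, mem_closedBall_zero_iff, hσ]
  obtain ⟨U, hU, hratio⟩ := exists_ultrafilter_tendsto_of_liminf_coe_eq hβ
  have hball : f ⁻¹' closedBall 0 1 ∈ U :=
    Filter.mem_of_superset (hU self_mem_nhdsWithin) fun w hw ↦ ball_subset_closedBall (hf.2 hw)
  obtain ⟨τ, -, hτ⟩ := (isCompact_closedBall (0 : ℂ) 1).ultrafilter_le_nhds' (U.map f) hball
  have hJ := fun w (hw : ‖w‖ < 1) ↦ hf.julia_of_tendsto hσ hU hratio hτ hw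
  obtain rfl := eq_of_julia_of_ntLim hσ hlim hJ
  simpa only [norm_one_sub_conj_mul_of_norm_eq_one hσ] using hJ z hz

lemma norm_mul_deriv_sub_one_le (hf : HolSelfDisk f) (hf0 : f 0 = 0) (hσ : ‖σ‖ = 1)
    (hJ : ∀ z : ℂ, ‖z‖ < 1 →
      (1 - ‖z‖ ^ 2) * ‖σ - f z‖ ^ 2 ≤ β * (1 - ‖f z‖ ^ 2) * ‖σ - z‖ ^ 2) :
    ‖β * deriv f 0 - 1‖ ≤ β - 1 := by
  have hne : ∀ w : ℂ, ‖w‖ < 1 → σ - w ≠ 0 := fun w hw h ↦ by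
    rw [sub_eq_zero] at h; rw [← h, hσ] at hw; exact hw.false
  have hσ0 : σ ≠ 0 := by simpa using hne 0 (by simp)
  set H : ℂ → ℂ := fun z ↦ β * ((σ + f z) / (σ - f z)) - (σ + z) / (σ - z)
  have hd : DifferentiableOn ℂ H (ball 0 1) := by
    refine ((((differentiableOn_const σ).add hf.1).div ((differentiableOn_const σ).sub hf.1)
      fun z hz ↦ hne _ (hf.norm_lt_one (mem_ball_zero_iff.mp hz))).const_mul _).sub
      (((differentiableOn_const σ).add differentiableOn_id).div
        ((differentiableOn_const σ).sub differentiableOn_id)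
        fun z hz ↦ hne _ (mem_ball_zero_iff.mp hz))
  have hre : ∀ z ∈ ball 0 1, 0 ≤ (H z).re := fun z hz ↦ by
    have hz := mem_ball_zero_iff.mp hz
    have hA : 0 < ‖σ - f z‖ := norm_pos_iff.mpr (hne _ (hf.norm_lt_one hz))
    have hB : 0 < ‖σ - z‖ := norm_pos_iff.mpr (hne _ hz)
    simp only [H, Complex.sub_re, Complex.re_ofReal_mul, re_add_div_sub_of_norm_eq_one hσ]
    rw [sub_nonneg, ← mul_div_assoc, div_le_div_iff₀ (by positivity) (by positivity)]
    linarith [hJ z hz]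
  have hH0 : H 0 = β - 1 := by simp [H, hf0, hσ0]
  have hf' : HasDerivAt f (deriv f 0) 0 :=
    (hf.1.differentiableAt (isOpen_ball.mem_nhds (mem_ball_self one_pos))).hasDerivAt
  have hH' : HasDerivAt H (2 * (β * deriv f 0 - 1) / σ) 0 := by
    refine (((hf'.const_add_div_const_sub (by rwa [hf0, sub_zero])).const_mul (β : ℂ)).sub
      ((hasDerivAt_id 0).const_add_div_const_sub (by rwa [id, sub_zero]))).congr_deriv ?_
    simp only [hf0, id, sub_zero]
    field_simp
  have := norm_deriv_mul_le_two_mul_re one_pos hd hre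
  rw [hH'.deriv, hH0, norm_div, norm_mul, hσ] at this
  simpa using this

end HolSelfDisk

theorem stmt10_general (f : ℂ → ℂ) (σ : ℂ) (β : ℝ) (hf : HolSelfDisk f)
    (hf0 : f 0 = 0)
    (hσ : ‖σ‖ = 1) (hβ : betaE f σ = (β : EReal))
    (hlim : NTLim f σ σ) :
    β ≥ 1 + ‖1 - deriv f 0‖ ^ 2 / (1 - ‖deriv f 0‖ ^ 2) :=
  one_add_norm_one_sub_sq_div_le <|
    hf.norm_mul_deriv_sub_one_le hf0 hσ fun _ hz ↦ hf.julia hσ hβ hlim hz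

/-- Cowen–Pommerenke estimate for a single boundary fixed point. -/
theorem stmt10 (f : ℂ → ℂ) (σ : ℂ) (β : ℝ) (hf : HolSelfDisk f)
    (hnot : ¬ IsBlaschke 1 f) (hf0 : f 0 = 0)
    (hσ : ‖σ‖ = 1) (hβ : betaE f σ = (β : EReal))
    (hlim : NTLim f σ σ) :
    β ≥ 1 + ‖1 - deriv f 0‖ ^ 2 / (1 - ‖deriv f 0‖ ^ 2) :=
  stmt10_general f σ β hf hf0 hσ hβ hlim
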